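/- arXiv:2011.04100 — 8 statements merged into one kernel-verified Lean document; each statement's English description precedes it below -/
import Mathlib

section
/- Let n, q ≥ 1, let L ∈ ℝ^{n×n} be a symmetric matrix with L·𝟏ₙ = 0 whose kernel is exactly the span of the all-ones vector 𝟏ₙ (the Laplacian of a connected undirected graph), and let N₁,…,Nₙ ∈ ℝ^{q×q} and b₁,…,bₙ ∈ ℝ^q. A pair (𝐯, 𝐲) ∈ ℝ^{nq} × ℝ^{nq} satisfies the block system 𝒩𝐯 − (L ⊗ I_q)𝐲 = 𝐛 and (L ⊗ I_q)𝐯 = 0 if and only if there exists v ∈ ℝ^q such that (∑_{i=1}^n Nᵢ) v = ∑_{i=1}^n bᵢ, 𝐯 = 𝟏ₙ ⊗ v, and (L ⊗ I_q)𝐲 = 𝒩(𝟏ₙ ⊗ v) − 𝐛. Moreover, any two vectors 𝐲, 𝐲′ satisfying these conditions for the same 𝐯 differ by 𝟏ₙ ⊗ y for some y ∈ ℝ^q. -/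
open Matrix
open scoped Kronecker

lemma kmv {n q : ℕ} (L : Matrix (Fin n) (Fin n) ℝ) (w : Fin n × Fin q → ℝ)
    (i : Fin n) (k : Fin q) :
    ((L ⊗ₖ (1 : Matrix (Fin q) (Fin q) ℝ)) *ᵥ w) (i, k) = ∑ j, L i j * w (j, k) := by
  simp only [mulVec, dotProduct, Fintype.sum_prod_type, kroneckerMap_apply, Matrix.one_apply,
    mul_ite, mul_one, mul_zero, ite_mul, zero_mul]
  simp

lemma nmv {n q : ℕ} (N : Fin n → Matrix (Fin q) (Fin q) ℝ)
    (NN : Matrix (Fin n × Fin q) (Fin n × Fin q) ℝ)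
    (hNN : ∀ p p' : Fin n × Fin q, NN p p' = if p.1 = p'.1 then N p.1 p.2 p'.2 else 0)
    (w : Fin n × Fin q → ℝ) (i : Fin n) (k : Fin q) :
    (NN *ᵥ w) (i, k) = (N i *ᵥ fun l => w (i, l)) k := by
  simp only [mulVec, dotProduct, Fintype.sum_prod_type, hNN]
  simp [Finset.sum_ite_eq, ite_mul, zero_mul]

lemma kzero {n q : ℕ} (L : Matrix (Fin n) (Fin n) ℝ)
    (hker : ∀ u : Fin n → ℝ, L *ᵥ u = 0 ↔ ∃ c : ℝ, u = fun _ => c)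
    (w : Fin n × Fin q → ℝ) (hw : (L ⊗ₖ (1 : Matrix (Fin q) (Fin q) ℝ)) *ᵥ w = 0) :
    ∃ v : Fin q → ℝ, w = fun p => v p.2 := by
  have h : ∀ k : Fin q, ∃ c : ℝ, (fun j => w (j, k)) = fun _ => c := by
    intro k
    rw [← hker]
    funext i
    have := congrFun hw (i, k)
    rw [kmv] at this
    simpa [mulVec, dotProduct] using this
  choose c hc using h
  refine ⟨c, ?_⟩
  funext p
  exact congrFun (hc p.2) p.1

lemma kconst {n q : ℕ} (L : Matrix (Fin n) (Fin n) ℝ)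
    (hL1 : L *ᵥ (fun _ => (1 : ℝ)) = 0) (v : Fin q → ℝ) :
    (L ⊗ₖ (1 : Matrix (Fin q) (Fin q) ℝ)) *ᵥ (fun p => v p.2) = 0 := by
  funext p
  obtain ⟨i, k⟩ := p
  rw [kmv]
  have := congrFun hL1 i
  simp only [mulVec, dotProduct, mul_one, Pi.zero_apply] at this
  simp [← Finset.sum_mul, this]

/-- Equivalence between the 1-hop distributed block system
`𝒩 𝐯 − (L ⊗ I_q) 𝐲 = 𝐛`, `(L ⊗ I_q) 𝐯 = 0` and the separable linear
equation `(∑ᵢ Nᵢ) v = ∑ᵢ bᵢ`, together with the structure of the `𝐲`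
component of the solutions. -/
theorem stmt0 (n q : ℕ) (hn : 1 ≤ n) (hq : 1 ≤ q)
    (L : Matrix (Fin n) (Fin n) ℝ) (hLsymm : L.IsSymm)
    (hL1 : L *ᵥ (fun _ => (1 : ℝ)) = 0)
    (hker : ∀ u : Fin n → ℝ, L *ᵥ u = 0 ↔ ∃ c : ℝ, u = fun _ => c)
    (N : Fin n → Matrix (Fin q) (Fin q) ℝ) (b : Fin n → Fin q → ℝ)
    (NN : Matrix (Fin n × Fin q) (Fin n × Fin q) ℝ)
    (hNN : ∀ p p' : Fin n × Fin q, NN p p' = if p.1 = p'.1 then N p.1 p.2 p'.2 else 0)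
    (bb : Fin n × Fin q → ℝ) (hbb : ∀ p : Fin n × Fin q, bb p = b p.1 p.2)
    (vv yy : Fin n × Fin q → ℝ) :
    ((NN *ᵥ vv - (L ⊗ₖ (1 : Matrix (Fin q) (Fin q) ℝ)) *ᵥ yy = bb ∧
        (L ⊗ₖ (1 : Matrix (Fin q) (Fin q) ℝ)) *ᵥ vv = 0) ↔
      ∃ v : Fin q → ℝ,
        (∑ i, N i) *ᵥ v = ∑ i, b i ∧
        vv = (fun p => v p.2) ∧
        (L ⊗ₖ (1 : Matrix (Fin q) (Fin q) ℝ)) *ᵥ yy =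
          NN *ᵥ (fun p => v p.2) - bb) ∧
    (∀ yy' yy'' : Fin n × Fin q → ℝ,
        (L ⊗ₖ (1 : Matrix (Fin q) (Fin q) ℝ)) *ᵥ yy' = NN *ᵥ vv - bb →
        (L ⊗ₖ (1 : Matrix (Fin q) (Fin q) ℝ)) *ᵥ yy'' = NN *ᵥ vv - bb →
        ∃ y : Fin q → ℝ, yy' - yy'' = fun p => y p.2) := by
  have hcolsum : ∀ j : Fin n, ∑ i, L i j = 0 := by
    intro j
    have h1 := congrFun hL1 j
    simp only [mulVec, dotProduct, mul_one, Pi.zero_apply] at h1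
    calc ∑ i, L i j = ∑ i, L j i := by
          refine Finset.sum_congr rfl fun i _ => ?_
          have := congrFun (congrFun hLsymm.eq j) i
          simpa [Matrix.transpose_apply] using this
      _ = 0 := h1
  have hysum : ∀ (w : Fin n × Fin q → ℝ) (k : Fin q),
      ∑ i, ((L ⊗ₖ (1 : Matrix (Fin q) (Fin q) ℝ)) *ᵥ w) (i, k) = 0 := by
    intro w k
    simp only [kmv]
    rw [Finset.sum_comm]
    simp [← Finset.sum_mul, hcolsum]
  constructor
  · constructor
    · rintro ⟨h1, h2⟩
      obtain ⟨v, hv⟩ := kzero L hker vv h2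
      refine ⟨v, ?_, hv, ?_⟩
      · funext k
        have hsum : ∑ i, (NN *ᵥ vv - (L ⊗ₖ (1 : Matrix (Fin q) (Fin q) ℝ)) *ᵥ yy) (i, k)
            = ∑ i, bb (i, k) := by rw [h1]
        simp only [Pi.sub_apply, Finset.sum_sub_distrib, hysum yy k, sub_zero] at hsum
        have hni : ∀ i : Fin n, (NN *ᵥ vv) (i, k) = (N i *ᵥ v) k := by
          intro i; rw [nmv N NN hNN]; subst hv; rfl
        simp only [hni, hbb] at hsum
        calc ((∑ i, N i) *ᵥ v) k = ∑ i, (N i *ᵥ v) k := by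
              simp only [mulVec, dotProduct, Matrix.sum_apply, Finset.sum_mul]
              rw [Finset.sum_comm]
          _ = ∑ i, b i k := hsum
          _ = (∑ i, b i) k := by simp
      · rw [← hv, ← h1]; abel
    · rintro ⟨v, hveq, hvv, hy⟩
      subst hvv
      refine ⟨?_, kconst L hL1 v⟩
      rw [hy]; abel
  · rintro yy' yy'' h1 h2
    apply kzero L hker
    rw [Matrix.mulVec_sub, h1, h2, sub_self]
end

section
/- Let 𝐏 ∈ ℝ^{N×N}, let 𝐪 ∈ ℝ^N lie in the range of 𝐏, and fix z₀ ∈ ℝ^N with 𝐏 z₀ = 𝐪. Let c > 0 be such that ⟨w, 𝐏ᵀ𝐏 w⟩ ≥ c‖w‖² for every w orthogonal to the kernel of 𝐏. Let d : ℝ → ℝ^N be continuous and let z : ℝ → ℝ^N be differentiable with ż(t) = −𝐏ᵀ(𝐏 z(t) − 𝐪) + d(t) for all t. Let Π denote the orthogonal projection of ℝ^N onto the orthogonal complement of the kernel of 𝐏, and set e(t) := Π(z(t) − z₀). Then for every t: (i) (d/dt) ½‖e(t)‖² ≤ −c‖e(t)‖² + ‖e(t)‖·‖d(t)‖; and consequently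 (ii) for any θ ∈ (0,1), at every time t at which ‖e(t)‖ ≥ ‖d(t)‖/(cθ), one has (d/dt) ½‖e(t)‖² ≤ −c(1−θ)‖e(t)‖². (Here z*(t) := z(t) − e(t) satisfies 𝐏 z*(t) = 𝐪 for all t, so e(t) is the error between z(t) and the time-varying nearest equilibrium.) -/
open Matrix
open scoped RealInnerProductSpace

/-- ISS-type Lyapunov estimate for the disturbed gradient dynamics
`ż = −𝐏ᵀ(𝐏z − 𝐪) + d(t)`: the projection `e` of `z − z₀` onto the orthogonal
complement of the kernel of `𝐏` satisfies
`(d/dt) ½‖e‖² ≤ −c‖e‖² + ‖e‖‖d‖`, hence for `θ ∈ (0,1)` the decay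
`(d/dt) ½‖e‖² ≤ −c(1−θ)‖e‖²` whenever `‖e‖ ≥ ‖d‖/(cθ)`; moreover
`z*(t) = z(t) − e(t)` is always a solution of `𝐏z = 𝐪`. -/
theorem stmt6 (N : ℕ) (P : Matrix (Fin N) (Fin N) ℝ)
    (z0 q : EuclideanSpace ℝ (Fin N))
    (hq : Matrix.toEuclideanLin P z0 = q)
    (c : ℝ) (hc : 0 < c)
    (hcoer : ∀ w : EuclideanSpace ℝ (Fin N),
      (∀ u : EuclideanSpace ℝ (Fin N), Matrix.toEuclideanLin P u = 0 → ⟪w, u⟫ = 0) →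
      c * ‖w‖ ^ 2 ≤ ⟪w, Matrix.toEuclideanLin (Pᵀ * P) w⟫)
    (d : ℝ → EuclideanSpace ℝ (Fin N)) (hd : Continuous d)
    (z : ℝ → EuclideanSpace ℝ (Fin N))
    (hz : ∀ t : ℝ, HasDerivAt z
      (-(Matrix.toEuclideanLin Pᵀ (Matrix.toEuclideanLin P (z t) - q)) + d t) t)
    (e : ℝ → EuclideanSpace ℝ (Fin N))
    (he : ∀ t, e t =
      (Submodule.orthogonalProjectionOnto (LinearMap.ker (Matrix.toEuclideanLin P))ᗮ (z t - z0) :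
        EuclideanSpace ℝ (Fin N))) :
    (∀ t : ℝ, deriv (fun s => (1 / 2 : ℝ) * ‖e s‖ ^ 2) t ≤
      -c * ‖e t‖ ^ 2 + ‖e t‖ * ‖d t‖) ∧
    (∀ θ : ℝ, θ ∈ Set.Ioo (0 : ℝ) 1 → ∀ t : ℝ, ‖d t‖ / (c * θ) ≤ ‖e t‖ →
      deriv (fun s => (1 / 2 : ℝ) * ‖e s‖ ^ 2) t ≤ -(c * (1 - θ)) * ‖e t‖ ^ 2) ∧
    (∀ t : ℝ, Matrix.toEuclideanLin P (z t - e t) = q) := by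
  set T := Matrix.toEuclideanLin P with hT
  set K := LinearMap.ker T with hK
  have heM : ∀ t, e t ∈ Kᗮ := fun t => by rw [he t]; exact (Submodule.orthogonalProjectionOnto Kᗮ (z t - z0)).2
  have hrem : ∀ t, (z t - z0) - e t ∈ K := by
    intro t
    have h1 : (z t - z0) - e t ∈ Kᗮᗮ := by
      rw [he t]; exact Submodule.sub_starProjection_mem_orthogonal _
    rwa [Submodule.orthogonal_orthogonal] at h1
  have hPe : ∀ t, T (z t - z0) = T (e t) := by
    intro t
    have h := hrem t
    rw [hK, LinearMap.mem_ker, map_sub, sub_eq_zero] at h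
    exact h
  -- part (iii)
  have part3 : ∀ t : ℝ, T (z t - e t) = q := by
    intro t
    have : T (z t - e t) = T (z t - z0) - T (e t) + T z0 := by
      simp [map_sub]; abel
    rw [this, hPe t, sub_self, zero_add, hq]
  -- ż t = -PᵀP (e t) + d t
  have hzd : ∀ t, HasDerivAt z (-(Matrix.toEuclideanLin Pᵀ (T (e t))) + d t) t := by
    intro t
    have : T (z t) - q = T (e t) := by
      have := hPe t
      rw [map_sub, hq] at this
      exact this
    simpa [this] using hz t
  -- projection as continuous linear map
  set L : EuclideanSpace ℝ (Fin N) →L[ℝ] EuclideanSpace ℝ (Fin N) :=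
    Kᗮ.subtypeL.comp (Submodule.orthogonalProjectionOnto Kᗮ) with hL
  have heL : ∀ t, e t = L (z t - z0) := fun t => he t
  have hderiv_e : ∀ t, HasDerivAt e (L (-(Matrix.toEuclideanLin Pᵀ (T (e t))) + d t)) t := by
    intro t
    have h1 : HasDerivAt (fun s => z s - z0) (-(Matrix.toEuclideanLin Pᵀ (T (e t))) + d t) t :=
      (hzd t).sub_const z0
    have h2 := (L.hasFDerivAt.comp_hasDerivAt t h1)
    exact h2.congr_of_eventuallyEq (Filter.Eventually.of_forall fun s => heL s)
  -- derivative of Lyapunov function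
  have hlyap : ∀ t, deriv (fun s => (1 / 2 : ℝ) * ‖e s‖ ^ 2) t
      = ⟪e t, L (-(Matrix.toEuclideanLin Pᵀ (T (e t))) + d t)⟫ := by
    intro t
    set v := L (-(Matrix.toEuclideanLin Pᵀ (T (e t))) + d t) with hv
    have h : HasDerivAt (fun s => ⟪e s, e s⟫) (⟪e t, v⟫ + ⟪v, e t⟫) t :=
      HasDerivAt.inner ℝ (hderiv_e t) (hderiv_e t)
    have h2 : HasDerivAt (fun s => (1/2 : ℝ) * ⟪e s, e s⟫)
        ((1/2 : ℝ) * (⟪e t, v⟫ + ⟪v, e t⟫)) t := h.const_mul (1/2 : ℝ)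
    have h3 : (fun s => (1 / 2 : ℝ) * ⟪e s, e s⟫) = fun s => (1 / 2 : ℝ) * ‖e s‖ ^ 2 := by
      funext s; rw [real_inner_self_eq_norm_sq]
    rw [h3] at h2
    rw [h2.deriv, real_inner_comm v (e t)]
    ring
  -- key: ⟪e t, L w⟫ = ⟪e t, w⟫
  have hproj : ∀ t (w : EuclideanSpace ℝ (Fin N)), ⟪e t, L w⟫ = ⟪e t, w⟫ := by
    intro t w
    have h1 : ⟪e t, (Submodule.orthogonalProjectionOnto Kᗮ w : EuclideanSpace ℝ (Fin N))⟫
        = ⟪(Submodule.orthogonalProjectionOnto Kᗮ (e t) : EuclideanSpace ℝ (Fin N)), w⟫ :=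
      (Submodule.inner_starProjection_left_eq_right Kᗮ (e t) w).symm
    have h2 : (Submodule.orthogonalProjectionOnto Kᗮ (e t) : EuclideanSpace ℝ (Fin N)) = e t := by
      exact congrArg _ (Submodule.orthogonalProjectionOnto_mem_subspace_eq_self ⟨e t, heM t⟩)
    simp only [hL, ContinuousLinearMap.comp_apply, Submodule.subtypeL_apply]
    rw [h1, h2]
  -- toEuclideanLin mul
  have hmul : ∀ w : EuclideanSpace ℝ (Fin N),
      Matrix.toEuclideanLin (Pᵀ * P) w = Matrix.toEuclideanLin Pᵀ (T w) := by
    intro w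
    simp [Matrix.toEuclideanLin_apply, hT, Matrix.mulVec_mulVec]
  -- main estimate
  have part1 : ∀ t : ℝ, deriv (fun s => (1 / 2 : ℝ) * ‖e s‖ ^ 2) t ≤
      -c * ‖e t‖ ^ 2 + ‖e t‖ * ‖d t‖ := by
    intro t
    rw [hlyap t, hproj t, inner_add_right, inner_neg_right]
    have hco : c * ‖e t‖ ^ 2 ≤ ⟪e t, Matrix.toEuclideanLin Pᵀ (T (e t))⟫ := by
      have := hcoer (e t) (fun u hu => by
        have := (heM t) u (LinearMap.mem_ker.mpr hu)
        rwa [real_inner_comm] at this)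
      rwa [hmul] at this
    have hcs : ⟪e t, d t⟫ ≤ ‖e t‖ * ‖d t‖ := real_inner_le_norm _ _
    linarith
  refine ⟨part1, ?_, part3⟩
  intro θ hθ t ht
  have hcθ : 0 < c * θ := mul_pos hc hθ.1
  have hdt : ‖d t‖ ≤ c * θ * ‖e t‖ := by
    rw [div_le_iff₀ hcθ] at ht; linarith
  have h0 : (0:ℝ) ≤ ‖e t‖ := norm_nonneg _
  have := part1 t
  nlinarith [this, mul_le_mul_of_nonneg_left hdt h0]
end

section
/- Let a₁,…,a_m, b₁,…,b_p ∈ ℝⁿ, let g ∈ ℝᵐ, and let γ ≠ 0. Let A ∈ ℝ^{n×m} be the matrix with columns a₁,…,a_m, let B ∈ ℝ^{n×p} be the matrix with columns b₁,…,b_p, and let G = diag(g) ∈ ℝ^{m×m}. If the family of vectors {a_j : g_j = 0} ∪ {b₁,…,b_p} is linearly independent, then the symmetric (m+p)×(m+p) block matrix N = [[AᵀA + γ²G², AᵀB],[BᵀA, BᵀB]] is positive definite. -/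
open Matrix

/-- LICQ implies positive definiteness of the matrix
`N = [[AᵀA + γ²G², AᵀB],[BᵀA, BᵀB]]`, where the columns of `A` are the
gradients `a_j` of the inequality constraints, the columns of `B` are the
gradients `b_k` of the equality constraints, and `G = diag(g)`. -/
theorem stmt7 (n m p : ℕ) (a : Fin m → Fin n → ℝ) (b : Fin p → Fin n → ℝ)
    (g : Fin m → ℝ) (γ : ℝ) (hγ : γ ≠ 0)
    (A : Matrix (Fin n) (Fin m) ℝ) (hA : ∀ i j, A i j = a j i)
    (B : Matrix (Fin n) (Fin p) ℝ) (hB : ∀ i k, B i k = b k i)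
    (G : Matrix (Fin m) (Fin m) ℝ) (hG : G = Matrix.diagonal g)
    (hLI : LinearIndependent ℝ
      (Sum.elim (fun j : {j : Fin m // g j = 0} => a j.1) b)) :
    (Matrix.fromBlocks (Aᵀ * A + γ ^ 2 • (G * G)) (Aᵀ * B) (Bᵀ * A) (Bᵀ * B)).PosDef := by
  -- N = Cᵀ C with C = fromBlocks A B (γ•G) 0
  set C : Matrix (Fin n ⊕ Fin m) (Fin m ⊕ Fin p) ℝ :=
    Matrix.fromBlocks A B (γ • G) 0 with hC
  have hGsymm : Gᵀ = G := by rw [hG]; exact Matrix.diagonal_transpose g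
  have hN : Matrix.fromBlocks (Aᵀ * A + γ ^ 2 • (G * G)) (Aᵀ * B) (Bᵀ * A) (Bᵀ * B)
      = Cᵀ * C := by
    rw [hC, Matrix.fromBlocks_transpose, Matrix.fromBlocks_multiply]
    simp [Matrix.transpose_smul, hGsymm, Matrix.smul_mul, Matrix.mul_smul, smul_smul, sq]
  rw [hN]
  have hCker : ∀ x : Fin m ⊕ Fin p → ℝ, C *ᵥ x = 0 → x = 0 := by
    intro x hx
    set u : Fin m → ℝ := x ∘ Sum.inl with hu
    set v : Fin p → ℝ := x ∘ Sum.inr with hv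
    rw [hC, Matrix.fromBlocks_mulVec] at hx
    have h1 : A *ᵥ u + B *ᵥ v = 0 := funext fun i => congrFun hx (Sum.inl i)
    have h2 : (γ • G) *ᵥ u + (0 : Matrix (Fin m) (Fin p) ℝ) *ᵥ v = 0 :=
      funext fun i => congrFun hx (Sum.inr i)
    have huinactive : ∀ j, g j ≠ 0 → u j = 0 := by
      intro j hj
      have := congrFun h2 j
      simp [hG, Matrix.smul_mulVec, Matrix.mulVec_diagonal, hγ, hj] at this
      tauto
    -- linear combination
    have hsum : (∑ i : {j : Fin m // g j = 0} ⊕ Fin p,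
        (Sum.elim (fun j : {j : Fin m // g j = 0} => u j.1) v) i •
          (Sum.elim (fun j : {j : Fin m // g j = 0} => a j.1) b) i) = 0 := by
      rw [Fintype.sum_sum_type]
      have hA' : A *ᵥ u = ∑ j : Fin m, u j • a j := by
        funext i
        simp only [Matrix.mulVec, dotProduct, Finset.sum_apply, Pi.smul_apply,
          smul_eq_mul, hA]
        exact Finset.sum_congr rfl fun j _ => mul_comm _ _
      have hB' : B *ᵥ v = ∑ k : Fin p, v k • b k := by
        funext i
        simp only [Matrix.mulVec, dotProduct, Finset.sum_apply, Pi.smul_apply,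
          smul_eq_mul, hB]
        exact Finset.sum_congr rfl fun k _ => mul_comm _ _
      have hsub : (∑ j : {j : Fin m // g j = 0}, u j.1 • a j.1)
          = ∑ j : Fin m, u j • a j := by
        rw [← Finset.sum_subtype (Finset.filter (fun j => g j = 0) Finset.univ)
          (fun j => by simp) (fun j => u j • a j)]
        exact Finset.sum_filter_of_ne (fun j _ hne => by
          by_contra hgj
          exact hne (by rw [huinactive j hgj, zero_smul]))
      simp only [Sum.elim_inl, Sum.elim_inr]
      rw [hsub, ← hA', ← hB', h1]
    have hzero := (Fintype.linearIndependent_iff.mp hLI) _ hsum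
    funext i
    cases i with
    | inl j =>
      by_cases hgj : g j = 0
      · exact hzero (Sum.inl ⟨j, hgj⟩)
      · exact huinactive j hgj
    | inr k => exact hzero (Sum.inr k)
  rw [Matrix.posDef_iff_dotProduct_mulVec]
  constructor
  · have := Matrix.isHermitian_conjTranspose_mul_self C
    simpa using this
  · intro x hx
    have key : (star x) ⬝ᵥ ((Cᵀ * C) *ᵥ x) = (C *ᵥ x) ⬝ᵥ (C *ᵥ x) := by
      rw [← Matrix.mulVec_mulVec, Matrix.dotProduct_mulVec, Matrix.vecMul_transpose]
      simp
    rw [key]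
    have hne : C *ᵥ x ≠ 0 := fun h => hx (hCker x h)
    have hnn : (0:ℝ) ≤ (C *ᵥ x) ⬝ᵥ (C *ᵥ x) :=
      Finset.sum_nonneg fun i _ => mul_self_nonneg _
    simpa using lt_of_le_of_ne hnn
      (fun h => hne ((dotProduct_self_eq_zero).mp h.symm))
end

section
/- Let A ∈ ℝ^{n×m}, B ∈ ℝ^{n×p}, g ∈ ℝᵐ, γ ∈ ℝ, and set G = diag(g) and N = [[AᵀA + γ²G², AᵀB],[BᵀA, BᵀB]] ∈ ℝ^{(m+p)×(m+p)}, and assume N is invertible. Let c ∈ ℝⁿ, λ̄ ∈ ℝᵐ, μ̄ ∈ ℝᵖ satisfy the KKT-type conditions c + Aλ̄ + Bμ̄ = 0, λ̄ ≥ 0 componentwise, g ≤ 0 componentwise, and ⟨λ̄, g⟩ = 0. Then (λ̄; μ̄) = −N⁻¹ [Aᵀ; Bᵀ] c; that is, the multiplier functions defined through N recover the Lagrange multipliers at a KKT point. -/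
open Matrix

/-- At a KKT point, the multiplier functions defined through
`N = [[AᵀA + γ²G², AᵀB],[BᵀA, BᵀB]]` recover the Lagrange multipliers:
`(λ̄; μ̄) = −N⁻¹ [Aᵀ; Bᵀ] c`. -/
theorem stmt8 (n m p : ℕ)
    (A : Matrix (Fin n) (Fin m) ℝ) (B : Matrix (Fin n) (Fin p) ℝ)
    (g : Fin m → ℝ) (γ : ℝ)
    (G : Matrix (Fin m) (Fin m) ℝ) (hG : G = Matrix.diagonal g)
    (Nm : Matrix (Fin m ⊕ Fin p) (Fin m ⊕ Fin p) ℝ)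
    (hNm : Nm = Matrix.fromBlocks (Aᵀ * A + γ ^ 2 • (G * G)) (Aᵀ * B) (Bᵀ * A) (Bᵀ * B))
    (hinv : IsUnit Nm.det)
    (c : Fin n → ℝ) (lam : Fin m → ℝ) (mu : Fin p → ℝ)
    (hstat : c + A *ᵥ lam + B *ᵥ mu = 0)
    (hlam : ∀ j, 0 ≤ lam j) (hgle : ∀ j, g j ≤ 0) (hcomp : lam ⬝ᵥ g = 0) :
    Sum.elim lam mu = -(Nm⁻¹ *ᵥ Sum.elim (Aᵀ *ᵥ c) (Bᵀ *ᵥ c)) := by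
  -- componentwise complementarity
  have hzero : ∀ j, lam j * g j = 0 := by
    have hle : ∀ j ∈ Finset.univ, lam j * g j ≤ 0 := fun j _ =>
      mul_nonpos_of_nonneg_of_nonpos (hlam j) (hgle j)
    have hsum : ∑ j, lam j * g j = 0 := hcomp
    intro j
    have := (Finset.sum_eq_zero_iff_of_nonpos hle).mp hsum j (Finset.mem_univ j)
    exact this
  have hGG : (G * G) *ᵥ lam = 0 := by
    subst hG
    rw [Matrix.diagonal_mul_diagonal]
    funext j
    simp [Matrix.mulVec_diagonal, Pi.zero_apply]
    exact (mul_eq_zero.mp (hzero j)).symm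
  have key : Nm *ᵥ Sum.elim lam mu = -(Sum.elim (Aᵀ *ᵥ c) (Bᵀ *ᵥ c)) := by
    have hc : A *ᵥ lam + B *ᵥ mu = -c := by
      have := hstat
      rw [add_assoc] at this
      linear_combination (norm := (funext j; simp; ring_nf)) this - hstat + this
    subst hNm
    funext i
    cases i with
    | inl i =>
      have hA : (Aᵀ * A) *ᵥ lam + (Aᵀ * B) *ᵥ mu = -(Aᵀ *ᵥ c) := by
        rw [← Matrix.mulVec_mulVec, ← Matrix.mulVec_mulVec, ← Matrix.mulVec_add, hc,
          Matrix.mulVec_neg]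
      have := congrFun hA i
      simp only [Matrix.fromBlocks_mulVec, Sum.elim_comp_inl, Sum.elim_comp_inr,
        Sum.elim_inl, Sum.elim_inr, Matrix.add_mulVec, Matrix.smul_mulVec,
        hGG, smul_zero, add_zero, Pi.add_apply, Pi.neg_apply]
      exact this
    | inr i =>
      have hB : (Bᵀ * A) *ᵥ lam + (Bᵀ * B) *ᵥ mu = -(Bᵀ *ᵥ c) := by
        rw [← Matrix.mulVec_mulVec, ← Matrix.mulVec_mulVec, ← Matrix.mulVec_add, hc,
          Matrix.mulVec_neg]
      have := congrFun hB i
      simp only [Matrix.fromBlocks_mulVec, Sum.elim_comp_inl, Sum.elim_comp_inr,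
        Sum.elim_inl, Sum.elim_inr, Pi.add_apply, Pi.neg_apply]
      exact this
  calc Sum.elim lam mu = (Nm⁻¹ * Nm) *ᵥ Sum.elim lam mu := by
        rw [Matrix.nonsing_inv_mul _ hinv, Matrix.one_mulVec]
    _ = Nm⁻¹ *ᵥ (Nm *ᵥ Sum.elim lam mu) := by rw [Matrix.mulVec_mulVec]
    _ = -(Nm⁻¹ *ᵥ Sum.elim (Aᵀ *ᵥ c) (Bᵀ *ᵥ c)) := by rw [key, Matrix.mulVec_neg]
end

section
/- Let f : ℝⁿ → ℝ be continuously differentiable, let χ : ℝⁿ → ℝᵐ be continuously differentiable with operator norm ‖Dχ(x)‖ ≤ M for all x, and let ψ : ℝⁿ × ℝᵐ → ℝⁿ satisfy ψ(x, χ(x)) = −∇f(x) for all x and ‖ψ(x,a) − ψ(x,b)‖ ≤ L‖a−b‖ for all x, a, b. Let x : ℝ → ℝⁿ and χ̂ : ℝ → ℝᵐ be differentiable with ẋ(t) = ψ(x(t), χ̂(t)) for all t, and suppose the estimation error e(t) := χ̂(t) − χ(x(t)) satisfies the estimator decay property ⟨e(t), χ̂'(t)⟩ ≤ −λ‖e(t)‖²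 for all t, where λ > 0. If there exists α > 0 such that (αL+M)²/(4α) + LM < λ, then there exists κ > 0 such that for all t, (d/dt)[α f(x(t)) + ½‖e(t)‖²] ≤ −κ(‖∇f(x(t))‖² + ‖e(t)‖²). In particular the composite Lyapunov function α f(x(t)) + ½‖e(t)‖² is nonincreasing, and is strictly decreasing unless ∇f(x(t)) = 0 and e(t) = 0. -/
open scoped RealInnerProductSpace

/-- Lyapunov decay estimate for the interconnection of the gradient-descent
dynamics `ẋ = ψ(x, χ̂)`, driven by an estimate `χ̂` of the non-locally
computable terms `χ(x)` of the gradient, with an exponentially convergent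
estimator: if `(αL+M)²/(4α) + LM < λ` for some `α > 0`, then the composite
Lyapunov function `α f(x) + ½‖χ̂ − χ(x)‖²` decays at a definite quadratic
rate. -/
theorem stmt12 (n m : ℕ)
    (f : EuclideanSpace ℝ (Fin n) → ℝ) (hf : ContDiff ℝ 1 f)
    (χ : EuclideanSpace ℝ (Fin n) → EuclideanSpace ℝ (Fin m)) (hχ : ContDiff ℝ 1 χ)
    (M : ℝ) (hM : ∀ x, ‖fderiv ℝ χ x‖ ≤ M)
    (ψ : EuclideanSpace ℝ (Fin n) → EuclideanSpace ℝ (Fin m) → EuclideanSpace ℝ (Fin n))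
    (L : ℝ)
    (hψgrad : ∀ x, ψ x (χ x) = -gradient f x)
    (hψlip : ∀ x a b, ‖ψ x a - ψ x b‖ ≤ L * ‖a - b‖)
    (x : ℝ → EuclideanSpace ℝ (Fin n)) (χhat : ℝ → EuclideanSpace ℝ (Fin m))
    (hx : ∀ t, HasDerivAt x (ψ (x t) (χhat t)) t)
    (hχhat : Differentiable ℝ χhat)
    (lam : ℝ) (hlam : 0 < lam)
    (hdecay : ∀ t, ⟪χhat t - χ (x t), deriv χhat t⟫ ≤ -lam * ‖χhat t - χ (x t)‖ ^ 2)
    (α : ℝ) (hα : 0 < α)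
    (hcond : (α * L + M) ^ 2 / (4 * α) + L * M < lam) :
    ∃ κ > 0, ∀ t : ℝ,
      deriv (fun s => α * f (x s) + (1 / 2 : ℝ) * ‖χhat s - χ (x s)‖ ^ 2) t ≤
        -κ * (‖gradient f (x t)‖ ^ 2 + ‖χhat t - χ (x t)‖ ^ 2) := by
  have hM0 : 0 ≤ M := le_trans (norm_nonneg _) (hM (x 0))
  set b := α * L + M with hbdef
  set c := lam - L * M with hcdef
  have hcgt : b ^ 2 / (4 * α) < c := by simp only [hcdef]; linarith
  have hc0 : 0 < c := lt_of_le_of_lt (by positivity) hcgt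
  have hb2 : b ^ 2 < 4 * α * c := by
    have := (div_lt_iff₀ (by positivity : (0:ℝ) < 4 * α)).mp hcgt
    linarith
  have hP : (0:ℝ) < 4 * (α + c) := by positivity
  refine ⟨(4 * α * c - b ^ 2) / (4 * (α + c)), div_pos (by linarith) hP, fun t => ?_⟩
  set κ := (4 * α * c - b ^ 2) / (4 * (α + c)) with hκdef
  -- key quadratic inequality
  have key : ∀ u v : ℝ, -α * u ^ 2 + b * (u * v) - c * v ^ 2 ≤ -κ * (u ^ 2 + v ^ 2) := by
    intro u v
    have hκ4 : κ * (4 * (α + c)) = 4 * α * c - b ^ 2 := by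
      rw [hκdef]; exact div_mul_cancel₀ _ hP.ne'
    have h1 : (4 * (α + c)) * (α * u ^ 2 - b * (u * v) + c * v ^ 2 - κ * (u ^ 2 + v ^ 2))
        = (2 * α * u - b * v) ^ 2 + (b * u - 2 * c * v) ^ 2 := by
      linear_combination (-(u ^ 2 + v ^ 2)) * hκ4
    have h2 : 0 ≤ (4 * (α + c)) * (α * u ^ 2 - b * (u * v) + c * v ^ 2 - κ * (u ^ 2 + v ^ 2)) := by
      rw [h1]; positivity
    nlinarith [h2, hP]
  -- derivatives
  set g := gradient f (x t) with hg
  set v := ψ (x t) (χhat t) with hv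
  set e : ℝ → EuclideanSpace ℝ (Fin m) := fun s => χhat s - χ (x s) with he
  have hχx : HasDerivAt (fun s => χ (x s)) (fderiv ℝ χ (x t) v) t :=
    (hχ.differentiable one_ne_zero (x t)).hasFDerivAt.comp_hasDerivAt t (hx t)
  have hed : HasDerivAt e (deriv χhat t - fderiv ℝ χ (x t) v) t :=
    ((hχhat t).hasDerivAt).sub hχx
  have hfx : HasDerivAt (fun s => f (x s)) (fderiv ℝ f (x t) v) t :=
    (hf.differentiable one_ne_zero (x t)).hasFDerivAt.comp_hasDerivAt t (hx t)
  have hgradeq : fderiv ℝ f (x t) v = ⟪g, v⟫ := by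
    simp [hg, gradient, InnerProductSpace.toDual_symm_apply]
  set e' := deriv χhat t - fderiv ℝ χ (x t) v with he'
  have hinner : HasDerivAt (fun s => ⟪e s, e s⟫) (⟪e t, e'⟫ + ⟪e', e t⟫) t :=
    hed.inner ℝ hed
  have hnormsq : HasDerivAt (fun s => ‖e s‖ ^ 2) (2 * ⟪e t, e'⟫) t := by
    have heq : (fun s => ‖e s‖ ^ 2) = fun s => ⟪e s, e s⟫ := by
      funext s; rw [real_inner_self_eq_norm_sq]
    rw [heq]
    convert hinner using 1
    rw [real_inner_comm e' (e t)]; ring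
  have hV : HasDerivAt (fun s => α * f (x s) + (1 / 2 : ℝ) * ‖χhat s - χ (x s)‖ ^ 2)
      (α * ⟪g, v⟫ + ⟪e t, e'⟫) t := by
    have := (hfx.const_mul α).add (hnormsq.const_mul (1 / 2 : ℝ))
    simp only [he] at this
    refine this.congr_deriv ?_
    rw [hgradeq]; ring
  rw [hV.deriv]
  -- bounds
  set u := ‖g‖ with hu
  set w := ‖χhat t - χ (x t)‖ with hw
  have hwe : ‖e t‖ = w := rfl
  set r := ψ (x t) (χhat t) - ψ (x t) (χ (x t)) with hr
  have hvr : v = -g + r := by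
    simp only [hr, hv]
    rw [hψgrad (x t)]; abel
  have h1 : ⟪g, v⟫ = -u ^ 2 + ⟪g, r⟫ := by
    rw [hvr, inner_add_right, inner_neg_right, real_inner_self_eq_norm_sq]
  have hrle : ‖r‖ ≤ L * w := hψlip (x t) (χhat t) (χ (x t))
  have h2 : ⟪g, r⟫ ≤ u * (L * w) :=
    le_trans (real_inner_le_norm g r) (mul_le_mul_of_nonneg_left hrle (norm_nonneg g))
  have h3 : ⟪e t, deriv χhat t⟫ ≤ -lam * w ^ 2 := hdecay t
  have hvnorm : ‖v‖ ≤ u + L * w := by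
    calc ‖v‖ = ‖-g + r‖ := by rw [hvr]
      _ ≤ ‖-g‖ + ‖r‖ := norm_add_le _ _
      _ ≤ u + L * w := by rw [norm_neg]; exact add_le_add le_rfl hrle
  have h4 : -⟪e t, fderiv ℝ χ (x t) v⟫ ≤ w * (M * (u + L * w)) := by
    have habs : |⟪e t, fderiv ℝ χ (x t) v⟫| ≤ w * ‖fderiv ℝ χ (x t) v‖ := by
      rw [← hwe]; exact abs_real_inner_le_norm _ _
    have hop : ‖fderiv ℝ χ (x t) v‖ ≤ M * (u + L * w) := by
      calc ‖fderiv ℝ χ (x t) v‖ ≤ ‖fderiv ℝ χ (x t)‖ * ‖v‖ := (fderiv ℝ χ (x t)).le_opNorm v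
        _ ≤ M * (u + L * w) := by
            apply mul_le_mul (hM (x t)) hvnorm (norm_nonneg v) hM0
    have := le_trans (neg_abs_le _) (le_refl (⟪e t, fderiv ℝ χ (x t) v⟫))
    have h5 : -⟪e t, fderiv ℝ χ (x t) v⟫ ≤ |⟪e t, fderiv ℝ χ (x t) v⟫| := neg_le_abs _
    calc -⟪e t, fderiv ℝ χ (x t) v⟫ ≤ w * ‖fderiv ℝ χ (x t) v‖ := le_trans h5 habs
      _ ≤ w * (M * (u + L * w)) := mul_le_mul_of_nonneg_left hop (norm_nonneg _)
  have hsplit : ⟪e t, e'⟫ = ⟪e t, deriv χhat t⟫ - ⟪e t, fderiv ℝ χ (x t) v⟫ := by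
    rw [he', inner_sub_right]
  calc α * ⟪g, v⟫ + ⟪e t, e'⟫
      ≤ -α * u ^ 2 + b * (u * w) - c * w ^ 2 := by
        rw [hsplit, h1, hbdef, hcdef]
        nlinarith [h2, h3, h4, hα, mul_le_mul_of_nonneg_left h2 hα.le]
    _ ≤ -κ * (u ^ 2 + w ^ 2) := key u w
end

section
/- Let f : ℝⁿ → ℝ be continuously differentiable, let χ : ℝⁿ → ℝᵐ be continuously differentiable with operator norm ‖Dχ(x)‖ ≤ M for all x, where M > 0, and let ψ : ℝⁿ × ℝᵐ → ℝⁿ satisfy ψ(x, χ(x)) = −∇f(x) for all x and ‖ψ(x,a) − ψ(x,b)‖ ≤ L‖a−b‖ for all x, a, b, where L > 0. Let λ > 0 and let τ satisfy 0 < τ < τ* := λ/(2LM). Let x : ℝ → ℝⁿ and χ̂ : ℝ → ℝᵐ be differentiable with ẋ(t) = ψ(x(t), χ̂(t)) for all t, and suppose the time-scaled estimator decay property ⟨e(t), χ̂'(t)⟩ ≤ −(λ/τ)‖e(t)‖² holds for all t, where e(t) := χ̂(t) − χ(x(t)). Then, taking α = M/L, there exists κ > 0 such that (d/dt)[α f(x(t))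 + ½‖e(t)‖²] ≤ −κ(‖∇f(x(t))‖² + ‖e(t)‖²) for all t. -/
open scoped RealInnerProductSpace

private lemma quad_aux (α c s κ1 κ2 M a b : ℝ) (hs : 0 < s)
    (hκ1s : κ1 * s = α * s - M ^ 2) (hκ2 : κ2 = c - s) :
    κ1 * a ^ 2 + κ2 * b ^ 2 ≤ α * a ^ 2 - 2 * M * a * b + c * b ^ 2 := by
  subst hκ2
  nlinarith [sq_nonneg (M * a - s * b), hs, sq_nonneg a, sq_nonneg b]

set_option maxHeartbeats 1000000 in

/-- Lyapunov decay estimate for the interconnection with the time-scaled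
estimator: if the estimation dynamics runs on a time scale
`0 < τ < τ* = λ/(2LM)` (so that its decay rate is `λ/τ`), then, with
`α = M/L`, the composite Lyapunov function `α f(x) + ½‖χ̂ − χ(x)‖²` decays at
a definite quadratic rate. -/
theorem stmt13 (n m : ℕ)
    (f : EuclideanSpace ℝ (Fin n) → ℝ) (hf : ContDiff ℝ 1 f)
    (χ : EuclideanSpace ℝ (Fin n) → EuclideanSpace ℝ (Fin m)) (hχ : ContDiff ℝ 1 χ)
    (M : ℝ) (hMpos : 0 < M) (hM : ∀ x, ‖fderiv ℝ χ x‖ ≤ M)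
    (ψ : EuclideanSpace ℝ (Fin n) → EuclideanSpace ℝ (Fin m) → EuclideanSpace ℝ (Fin n))
    (L : ℝ) (hLpos : 0 < L)
    (hψgrad : ∀ x, ψ x (χ x) = -gradient f x)
    (hψlip : ∀ x a b, ‖ψ x a - ψ x b‖ ≤ L * ‖a - b‖)
    (lam : ℝ) (hlam : 0 < lam)
    (τ : ℝ) (hτ : 0 < τ) (hττ : τ < lam / (2 * L * M))
    (x : ℝ → EuclideanSpace ℝ (Fin n)) (χhat : ℝ → EuclideanSpace ℝ (Fin m))
    (hx : ∀ t, HasDerivAt x (ψ (x t) (χhat t)) t)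
    (hχhat : Differentiable ℝ χhat)
    (hdecay : ∀ t, ⟪χhat t - χ (x t), deriv χhat t⟫ ≤
      -(lam / τ) * ‖χhat t - χ (x t)‖ ^ 2) :
    ∃ κ > 0, ∀ t : ℝ,
      deriv (fun s => (M / L) * f (x s) + (1 / 2 : ℝ) * ‖χhat s - χ (x s)‖ ^ 2) t ≤
        -κ * (‖gradient f (x t)‖ ^ 2 + ‖χhat t - χ (x t)‖ ^ 2) := by
  -- constants
  have hLM : 0 < L * M := mul_pos hLpos hMpos
  have hrate : 2 * L * M < lam / τ := by
    have h := (lt_div_iff₀ (by positivity : (0:ℝ) < 2 * L * M)).mp hττ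
    rw [lt_div_iff₀ hτ]; nlinarith
  obtain ⟨α, hα⟩ : ∃ α : ℝ, α = M / L := ⟨_, rfl⟩
  obtain ⟨c, hc⟩ : ∃ c : ℝ, c = lam / τ - L * M := ⟨_, rfl⟩
  have hcLM : L * M < c := by rw [hc]; linarith
  obtain ⟨s, hs⟩ : ∃ s : ℝ, s = (c + L * M) / 2 := ⟨_, rfl⟩
  have hs_pos : 0 < s := by rw [hs]; linarith
  have hsLM : L * M < s := by rw [hs]; linarith
  have hsc : s < c := by rw [hs]; linarith
  have hαpos : 0 < α := by rw [hα]; positivity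
  have hαL : α * L = M := by rw [hα]; field_simp
  obtain ⟨κ1, hκ1⟩ : ∃ κ1 : ℝ, κ1 = α - M ^ 2 / s := ⟨_, rfl⟩
  obtain ⟨κ2, hκ2⟩ : ∃ κ2 : ℝ, κ2 = c - s := ⟨_, rfl⟩
  have hκ1pos : 0 < κ1 := by
    have : M ^ 2 / s < α := by
      rw [div_lt_iff₀ hs_pos, hα, div_mul_eq_mul_div, lt_div_iff₀ hLpos]
      nlinarith
    rw [hκ1]; linarith
  have hκ2pos : 0 < κ2 := by rw [hκ2]; linarith
  refine ⟨min κ1 κ2, lt_min hκ1pos hκ2pos, fun t => ?_⟩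
  -- differentiability facts
  have hfd : Differentiable ℝ f := hf.differentiable one_ne_zero
  have hχd : Differentiable ℝ χ := hχ.differentiable one_ne_zero
  -- e and its derivative
  set e : ℝ → EuclideanSpace ℝ (Fin m) := fun s => χhat s - χ (x s) with he_def
  set v : EuclideanSpace ℝ (Fin n) := ψ (x t) (χhat t) with hv
  have hxe : HasDerivAt (fun s => χ (x s)) (fderiv ℝ χ (x t) v) t :=
    (hχd (x t)).hasFDerivAt.comp_hasDerivAt t (hx t)
  set e' : EuclideanSpace ℝ (Fin m) := deriv χhat t - fderiv ℝ χ (x t) v with he'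
  have he : HasDerivAt e e' t := ((hχhat t).hasDerivAt).sub hxe
  -- derivative of ‖e‖²
  have hnorm : HasDerivAt (fun s => ‖e s‖ ^ 2) (2 * ⟪e t, e'⟫) t := by
    have h1 : HasDerivAt (fun s => ⟪e s, e s⟫) (⟪e t, e'⟫ + ⟪e', e t⟫) t :=
      he.inner ℝ he
    have h2 : (fun s => ⟪e s, e s⟫) = fun s => ‖e s‖ ^ 2 := by
      funext s; exact real_inner_self_eq_norm_sq _
    rw [h2] at h1
    convert h1 using 1
    rw [real_inner_comm e' (e t)]; ring
  -- derivative of f ∘ x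
  have hfx : HasDerivAt (fun s => f (x s)) (⟪gradient f (x t), v⟫) t := by
    have h1 : HasDerivAt (fun s => f (x s)) (fderiv ℝ f (x t) v) t :=
      (hfd (x t)).hasFDerivAt.comp_hasDerivAt t (hx t)
    convert h1 using 1
    simp [gradient, InnerProductSpace.toDual_symm_apply]
  -- total derivative
  have htot : HasDerivAt (fun s => (M / L) * f (x s) + (1 / 2 : ℝ) * ‖e s‖ ^ 2)
      ((M / L) * ⟪gradient f (x t), v⟫ + (1 / 2 : ℝ) * (2 * ⟪e t, e'⟫)) t :=
    ((hfx.const_mul (M / L)).add (hnorm.const_mul (1 / 2 : ℝ)))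
  rw [show (fun s => (M / L) * f (x s) + (1 / 2 : ℝ) * ‖χhat s - χ (x s)‖ ^ 2)
      = (fun s => (M / L) * f (x s) + (1 / 2 : ℝ) * ‖e s‖ ^ 2) from rfl, htot.deriv]
  rw [← hα]
  -- bounds
  obtain ⟨a, ha⟩ : ∃ a : ℝ, a = ‖gradient f (x t)‖ := ⟨_, rfl⟩
  obtain ⟨b, hb⟩ : ∃ b : ℝ, b = ‖χhat t - χ (x t)‖ := ⟨_, rfl⟩
  rw [← ha, ← hb]
  have hbe : ‖e t‖ = b := hb.symm
  have ha0 : 0 ≤ a := ha ▸ norm_nonneg _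
  have hb0 : 0 ≤ b := hb ▸ norm_nonneg _
  set d : EuclideanSpace ℝ (Fin n) := ψ (x t) (χhat t) - ψ (x t) (χ (x t)) with hd
  have hdnorm : ‖d‖ ≤ L * b := by
    calc ‖d‖ ≤ L * ‖χhat t - χ (x t)‖ := hψlip _ _ _
    _ = L * b := by rw [hb]
  have hvdecomp : v = -gradient f (x t) + d := by
    simp [hv, hd, hψgrad (x t)]
  have hvnorm : ‖v‖ ≤ a + L * b := by
    rw [hvdecomp]
    calc ‖-gradient f (x t) + d‖ ≤ ‖-gradient f (x t)‖ + ‖d‖ := norm_add_le _ _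
    _ ≤ a + L * b := by rw [norm_neg, ← ha]; exact add_le_add le_rfl hdnorm
  -- bound gradient term
  have hgrad_bound : ⟪gradient f (x t), v⟫ ≤ -a ^ 2 + a * (L * b) := by
    rw [hvdecomp, inner_add_right, inner_neg_right, real_inner_self_eq_norm_sq, ← ha]
    have : ⟪gradient f (x t), d⟫ ≤ a * (L * b) := by
      calc ⟪gradient f (x t), d⟫ ≤ ‖gradient f (x t)‖ * ‖d‖ := real_inner_le_norm _ _
      _ = a * ‖d‖ := by rw [ha]
      _ ≤ a * (L * b) := mul_le_mul_of_nonneg_left hdnorm ha0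
    linarith
  -- bound e term
  have he_bound : ⟪e t, e'⟫ ≤ -(lam / τ) * b ^ 2 + b * (M * (a + L * b)) := by
    rw [he', inner_sub_right]
    have h1 : ⟪e t, deriv χhat t⟫ ≤ -(lam / τ) * b ^ 2 := by
      rw [hb]; exact hdecay t
    have h2 : -⟪e t, fderiv ℝ χ (x t) v⟫ ≤ b * (M * (a + L * b)) := by
      have := abs_real_inner_le_norm (e t) (fderiv ℝ χ (x t) v)
      have hop : ‖fderiv ℝ χ (x t) v‖ ≤ M * ‖v‖ :=
        le_trans ((fderiv ℝ χ (x t)).le_opNorm v)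
          (mul_le_mul_of_nonneg_right (hM (x t)) (norm_nonneg _))
      have hMv : M * ‖v‖ ≤ M * (a + L * b) :=
        mul_le_mul_of_nonneg_left hvnorm hMpos.le
      rw [← hbe] at *
      nlinarith [neg_abs_le (⟪e t, fderiv ℝ χ (x t) v⟫), norm_nonneg (e t)]
    linarith
  -- combine
  have key : α * ⟪gradient f (x t), v⟫ + (1 / 2 : ℝ) * (2 * ⟪e t, e'⟫)
      ≤ -α * a ^ 2 + 2 * M * a * b - c * b ^ 2 := by
    have h1 : α * ⟪gradient f (x t), v⟫ ≤ -α * a ^ 2 + M * a * b := by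
      have := mul_le_mul_of_nonneg_left hgrad_bound hαpos.le
      have hexp : α * (-a ^ 2 + a * (L * b)) = -α * a ^ 2 + (α * L) * a * b := by ring
      rw [hexp, hαL] at this; exact this
    have h2 : ⟪e t, e'⟫ ≤ M * a * b - c * b ^ 2 := by
      have hE : -(lam / τ) * b ^ 2 + b * (M * (a + L * b)) = M * a * b - c * b ^ 2 := by
        rw [hc]; ring
      linarith [he_bound, hE.le]
    linarith
  refine le_trans key ?_
  -- quadratic form inequality
  have hκ1s : κ1 * s = α * s - M ^ 2 := by
    rw [hκ1]; field_simp
  have hQ : κ1 * a ^ 2 + κ2 * b ^ 2 ≤ α * a ^ 2 - 2 * M * a * b + c * b ^ 2 :=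
    quad_aux α c s κ1 κ2 M a b hs_pos hκ1s hκ2
  have hmin1 : min κ1 κ2 ≤ κ1 := min_le_left _ _
  have hmin2 : min κ1 κ2 ≤ κ2 := min_le_right _ _
  nlinarith [sq_nonneg a, sq_nonneg b, hQ, hmin1, hmin2]
end

section
/- Let f : ℝⁿ → ℝ and h : ℝⁿ → ℝᵖ be twice continuously differentiable, and assume the n×p matrix ∇h(x) (whose columns are the gradients ∇h_k(x)) has full column rank p for every x ∈ ℝⁿ. For ε > 0 define μ(x) = −(∇h(x)ᵀ∇h(x))⁻¹ ∇h(x)ᵀ ∇f(x) and the penalty function f^ε(x) = f(x) + ⟨μ(x), h(x)⟩ + (1/ε)‖h(x)‖². Let x : [t₀, ∞) → ℝⁿ be continuously differentiable with ẋ(t) = −∇f^ε(x(t)) for all t ≥ t₀. If h(x(t₀)) = 0, then h(x(t)) = 0 for all t ≥ t₀, for every ε > 0; that is, the feasible set of the equality-constrained problem is invariant under the gradient dynamics of the penalty function. -/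
open Matrix
open scoped RealInnerProductSpace

section aux
variable {E : Type*} [NormedAddCommGroup E] [InnerProductSpace ℝ E] [CompleteSpace E]

lemma inner_gradient_eq (φ : E → ℝ) (y w : E) : ⟪gradient φ y, w⟫ = fderiv ℝ φ y w := by
  simp [gradient, InnerProductSpace.toDual_symm_apply]

omit [CompleteSpace E] in
lemma gram_isUnit {q : ℕ} (v : Fin q → E) (hv : LinearIndependent ℝ v) :
    IsUnit (Matrix.of fun j k => (⟪v j, v k⟫ : ℝ)).det := by
  rw [← Matrix.isUnit_iff_isUnit_det, ← Matrix.mulVec_injective_iff_isUnit]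
  have key : ∀ c : Fin q → ℝ, Matrix.mulVec (Matrix.of fun j k => (⟪v j, v k⟫ : ℝ)) c = 0 → c = 0 := by
    intro c hc
    have h1 : ∀ j, ⟪v j, ∑ k, c k • v k⟫ = (0:ℝ) := by
      intro j
      have := congrFun hc j
      simpa [Matrix.mulVec, dotProduct, inner_sum, real_inner_smul_right, mul_comm] using this
    have h2 : ⟪∑ j, c j • v j, ∑ k, c k • v k⟫ = (0:ℝ) := by
      rw [sum_inner]
      simp [real_inner_smul_left, h1]
    have h3 : ∑ j, c j • v j = 0 := by
      rwa [inner_self_eq_zero] at h2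
    have := linearIndependent_iff'.1 hv Finset.univ c h3
    funext j; simpa using this j (Finset.mem_univ j)
  intro c d hcd
  have : c - d = 0 := key _ (by rw [Matrix.mulVec_sub, hcd, sub_self])
  exact sub_eq_zero.mp this

lemma contDiff_det_comp {X : Type*} [NormedAddCommGroup X] [NormedSpace ℝ X]
    {q : ℕ} {m : WithTop ℕ∞} {A : X → Matrix (Fin q) (Fin q) ℝ}
    (hA : ∀ i j, ContDiff ℝ m fun x => A x i j) :
    ContDiff ℝ m fun x => (A x).det := by
  have : (fun x => (A x).det) =
      fun x => ∑ σ : Equiv.Perm (Fin q), (Equiv.Perm.sign σ : ℤ) • ∏ i, A x (σ i) i := by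
    funext x; rw [Matrix.det_apply]; simp [Units.smul_def]
  rw [this]
  apply ContDiff.sum
  intro σ _
  have : (fun x => (Equiv.Perm.sign σ : ℤ) • ∏ i, A x (σ i) i) =
      fun x => ((Equiv.Perm.sign σ : ℤ) : ℝ) * ∏ i, A x (σ i) i := by
    funext x; simp [zsmul_eq_mul]
  rw [this]
  exact contDiff_const.mul (contDiff_prod fun i _ => hA (σ i) i)

lemma gradient_eq_coords {n : ℕ} (φ : EuclideanSpace ℝ (Fin n) → ℝ)
    (y : EuclideanSpace ℝ (Fin n)) :
    gradient φ y = fun i => fderiv ℝ φ y (EuclideanSpace.single i 1) := by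
  funext i
  have h1 : gradient φ y i = ⟪gradient φ y, EuclideanSpace.single i (1:ℝ)⟫ := by
    rw [EuclideanSpace.inner_single_right]; simp
  rw [h1, inner_gradient_eq]

lemma contDiff_gradient {n : ℕ} (φ : EuclideanSpace ℝ (Fin n) → ℝ) (hφ : ContDiff ℝ 2 φ) :
    ContDiff ℝ 1 fun y => gradient φ y := by
  have h1 : ContDiff ℝ 1 fun y => fderiv ℝ φ y := hφ.fderiv_right (by norm_num)
  rw [contDiff_euclidean]
  intro i
  have : (fun y => gradient φ y i) = fun y => fderiv ℝ φ y (EuclideanSpace.single i 1) := by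
    funext y; rw [gradient_eq_coords]
  rw [this]
  exact h1.clm_apply contDiff_const

lemma euclidean_norm_sq {q : ℕ} (v : EuclideanSpace ℝ (Fin q)) :
    ‖v‖ ^ 2 = ∑ k, v k * v k := by
  have := EuclideanSpace.norm_eq v
  rw [this, Real.sq_sqrt (by positivity)]
  congr 1; funext k; rw [Real.norm_eq_abs, sq_abs]; ring

lemma euclidean_coord_le_norm {q : ℕ} (v : EuclideanSpace ℝ (Fin q)) (k : Fin q) :
    |v k| ≤ ‖v‖ := by
  have h1 : (⟪EuclideanSpace.single k (1:ℝ), v⟫ : ℝ) = v k := by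
    rw [EuclideanSpace.inner_single_left]; simp
  calc |v k| = |⟪EuclideanSpace.single k (1:ℝ), v⟫| := by rw [h1]
    _ ≤ ‖EuclideanSpace.single k (1:ℝ)‖ * ‖v‖ := abs_real_inner_le_norm _ _
    _ = ‖v‖ := by rw [EuclideanSpace.norm_single]; simp

lemma euclidean_norm_le_sum_abs {q : ℕ} (v : EuclideanSpace ℝ (Fin q)) :
    ‖v‖ ≤ ∑ k, |v k| := by
  have h1 : v = ∑ k, EuclideanSpace.single k (v k) := by
    ext i
    rw [WithLp.ofLp_sum, Finset.sum_apply]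
    simp [EuclideanSpace.single_apply]
  calc ‖v‖ = ‖∑ k, EuclideanSpace.single k (v k)‖ := by rw [← h1]
    _ ≤ ∑ k, ‖EuclideanSpace.single k (v k)‖ := norm_sum_le _ _
    _ = ∑ k, |v k| := by simp [EuclideanSpace.norm_single, Real.norm_eq_abs]

end aux

/-- Invariance of the feasible set of the equality-constrained problem under
the gradient dynamics of the continuously differentiable exact penalty
function `f^ε(x) = f(x) + ⟨μ(x), h(x)⟩ + (1/ε)‖h(x)‖²`, where
`μ(x) = −(∇h(x)ᵀ∇h(x))⁻¹ ∇h(x)ᵀ ∇f(x)`: if `h(x(t₀)) = 0` then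
`h(x(t)) = 0` for all `t ≥ t₀`, for every `ε > 0`. -/
theorem stmt14 (n p : ℕ) (t0 : ℝ)
    (f : EuclideanSpace ℝ (Fin n) → ℝ) (hf : ContDiff ℝ 2 f)
    (h : EuclideanSpace ℝ (Fin n) → EuclideanSpace ℝ (Fin p)) (hh : ContDiff ℝ 2 h)
    (hrank : ∀ x : EuclideanSpace ℝ (Fin n),
      LinearIndependent ℝ (fun k : Fin p => gradient (fun y => h y k) x))
    (ε : ℝ) (hε : 0 < ε)
    (Hm : EuclideanSpace ℝ (Fin n) → Matrix (Fin p) (Fin p) ℝ)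
    (hHm : ∀ x, Hm x = Matrix.of fun j k =>
      ⟪gradient (fun y => h y j) x, gradient (fun y => h y k) x⟫)
    (μ : EuclideanSpace ℝ (Fin n) → Fin p → ℝ)
    (hμ : ∀ x, μ x =
      -((Hm x)⁻¹ *ᵥ fun k => ⟪gradient (fun y => h y k) x, gradient f x⟫))
    (feps : EuclideanSpace ℝ (Fin n) → ℝ)
    (hfeps : ∀ x, feps x = f x + (∑ k, μ x k * h x k) + (1 / ε) * ‖h x‖ ^ 2)
    (x : ℝ → EuclideanSpace ℝ (Fin n))
    (hx : ∀ t : ℝ, t0 ≤ t → HasDerivAt x (-gradient feps (x t)) t)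
    (hx0 : h (x t0) = 0) :
    ∀ t : ℝ, t0 ≤ t → h (x t) = 0 := by
  classical
  -- coordinate functions of h are C²
  have hhk : ∀ k : Fin p, ContDiff ℝ 2 fun y => h y k := fun k => contDiff_euclidean.1 hh k
  set Gh : Fin p → EuclideanSpace ℝ (Fin n) → EuclideanSpace ℝ (Fin n) :=
    fun k y => gradient (fun z => h z k) y with hGhdef
  have hGhC : ∀ k, ContDiff ℝ 1 (Gh k) := fun k => contDiff_gradient _ (hhk k)
  have hGf : ContDiff ℝ 1 fun y => gradient f y := contDiff_gradient _ hf
  set g : EuclideanSpace ℝ (Fin n) → Fin p → ℝ :=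
    fun y k => ⟪Gh k y, gradient f y⟫ with hgdef
  have hgC : ∀ k, ContDiff ℝ 1 fun y => g y k := fun k => ContDiff.inner ℝ (hGhC k) hGf
  have hHmE : ∀ y j k, Hm y j k = ⟪Gh j y, Gh k y⟫ := by
    intro y j k; rw [hHm]; rfl
  have hHmC : ∀ j k, ContDiff ℝ 1 fun y => Hm y j k := by
    intro j k
    have : (fun y => Hm y j k) = fun y => ⟪Gh j y, Gh k y⟫ := by
      funext y; rw [hHmE]
    rw [this]; exact ContDiff.inner ℝ (hGhC j) (hGhC k)
  have hdet : ∀ y, IsUnit (Hm y).det := by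
    intro y; rw [hHm]; exact gram_isUnit _ (hrank y)
  -- μ is C¹
  have hμform : ∀ y k, μ y k =
      -((Hm y).det⁻¹ * ∑ l, ((Hm y).updateRow l (Pi.single k 1)).det * g y l) := by
    intro y k
    have h0 : (fun l => ⟪gradient (fun z => h z l) y, gradient f y⟫) = g y := rfl
    rw [hμ y]
    rw [h0]
    have h1 : (Hm y)⁻¹ = (Hm y).det⁻¹ • (Hm y).adjugate := by
      rw [Matrix.inv_def, Ring.inverse_eq_inv']
    rw [Pi.neg_apply, h1]
    rw [Matrix.smul_mulVec]
    rw [Pi.smul_apply]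
    congr 1
    rw [smul_eq_mul]
    congr 1
    simp only [Matrix.mulVec, dotProduct, Matrix.adjugate_apply]
  have hμC : ∀ k, ContDiff ℝ 1 fun y => μ y k := by
    intro k
    have : (fun y => μ y k) =
        fun y => -((Hm y).det⁻¹ * ∑ l, ((Hm y).updateRow l (Pi.single k 1)).det * g y l) := by
      funext y; rw [hμform]
    rw [this]
    apply ContDiff.neg
    apply ContDiff.mul
    · exact (contDiff_det_comp hHmC).inv fun y => (hdet y).ne_zero
    · apply ContDiff.sum; intro l _
      apply ContDiff.mul _ (hgC l)
      apply contDiff_det_comp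
      intro i j
      by_cases hi : i = l
      · simpa [Matrix.updateRow_apply, hi] using contDiff_const
      · simpa [Matrix.updateRow_apply, hi] using hHmC i j
  -- cancellation
  have hcancel : ∀ y j, g y j + ∑ k, μ y k * Hm y j k = 0 := by
    intro y j
    have h1 : Hm y *ᵥ μ y = -(g y) := by
      rw [hμ y]
      have h0 : (fun l => ⟪gradient (fun z => h z l) y, gradient f y⟫) = g y := rfl
      rw [h0, Matrix.mulVec_neg, Matrix.mulVec_mulVec,
        Matrix.mul_nonsing_inv _ (hdet y), Matrix.one_mulVec]
    have h2 := congrFun h1 j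
    simp only [Matrix.mulVec, dotProduct, Pi.neg_apply] at h2
    have h3 : ∑ k, μ y k * Hm y j k = ∑ k, Hm y j k * μ y k :=
      Finset.sum_congr rfl fun k _ => mul_comm _ _
    rw [h3, h2]; ring
  -- derivative machinery
  have hdiffh : ∀ (k : Fin p) y, HasFDerivAt (fun z => h z k)
      (fderiv ℝ (fun z => h z k) y) y :=
    fun k y => (((hhk k).differentiable (by norm_num)) y).hasFDerivAt
  have hdiffμ : ∀ (k : Fin p) y, HasFDerivAt (fun z => μ z k)
      (fderiv ℝ (fun z => μ z k) y) y :=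
    fun k y => (((hμC k).differentiable (by norm_num)) y).hasFDerivAt
  have hdifff : ∀ y, HasFDerivAt f (fderiv ℝ f y) y :=
    fun y => ((hf.differentiable (by norm_num)) y).hasFDerivAt
  have hfeps' : feps = fun y => f y + (∑ k, μ y k * h y k) + (1/ε) * ∑ k, h y k * h y k := by
    funext y; rw [hfeps y, euclidean_norm_sq (h y)]
  set Φ : EuclideanSpace ℝ (Fin n) → (EuclideanSpace ℝ (Fin n) →L[ℝ] ℝ) := fun y =>
    fderiv ℝ f y + (∑ k, (μ y k • fderiv ℝ (fun z => h z k) y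
      + h y k • fderiv ℝ (fun z => μ z k) y))
    + (1/ε) • ∑ k, (h y k • fderiv ℝ (fun z => h z k) y
      + h y k • fderiv ℝ (fun z => h z k) y) with hΦdef
  have hFeps : ∀ y, HasFDerivAt feps (Φ y) y := by
    intro y
    rw [hfeps', hΦdef]
    exact ((hdifff y).fun_add (HasFDerivAt.fun_sum fun k _ => (hdiffμ k y).fun_mul (hdiffh k y))).fun_add
      ((HasFDerivAt.fun_sum fun k _ => (hdiffh k y).fun_mul (hdiffh k y)).const_mul (1/ε))
  have hgradfeps : ∀ y w, (⟪gradient feps y, w⟫ : ℝ) = Φ y w := by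
    intro y w; rw [inner_gradient_eq, (hFeps y).fderiv]
  -- evaluation of the derivative on gradients of constraints
  have hDhval : ∀ (k j : Fin p) y, fderiv ℝ (fun z => h z k) y (Gh j y) = Hm y j k := by
    intro k j y
    rw [← inner_gradient_eq (fun z => h z k) y (Gh j y)]
    rw [hHmE y j k]
    exact real_inner_comm _ _
  have hDfval : ∀ (j : Fin p) y, fderiv ℝ f y (Gh j y) = g y j := by
    intro j y
    rw [← inner_gradient_eq f y (Gh j y), hgdef]
    exact real_inner_comm _ _
  have hΦeval : ∀ y (j : Fin p), Φ y (Gh j y) =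
      ∑ k, (fderiv ℝ (fun z => μ z k) y (Gh j y) + (2/ε) * Hm y j k) * h y k := by
    intro y j
    rw [hΦdef]
    simp only [ContinuousLinearMap.add_apply, ContinuousLinearMap.coe_sum',
      Finset.sum_apply, ContinuousLinearMap.coe_smul', Pi.smul_apply, smul_eq_mul,
      hDhval, hDfval]
    have hc : ∑ k, μ y k * Hm y j k = -g y j := by
      have := hcancel y j; linarith
    rw [Finset.sum_add_distrib, hc, Finset.mul_sum]
    rw [Finset.sum_congr rfl (fun k _ => (by ring :
      (fderiv ℝ (fun z => μ z k) y (Gh j y) + (2/ε) * Hm y j k) * h y k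
      = h y k * (fderiv ℝ (fun z => μ z k) y (Gh j y))
        + 1/ε * (h y k * Hm y j k + h y k * Hm y j k)))]
    rw [Finset.sum_add_distrib]
    ring
  -- full derivative of h along the flow
  have hdiffH : ∀ y, HasFDerivAt h (fderiv ℝ h y) y :=
    fun y => ((hh.differentiable (by norm_num)) y).hasFDerivAt
  have hproj : ∀ (j : Fin p) y (u : EuclideanSpace ℝ (Fin n)),
      fderiv ℝ (fun z => h z j) y u = fderiv ℝ h y u j := by
    intro j y u
    have hcomp0 := ((EuclideanSpace.proj j : EuclideanSpace ℝ (Fin p) →L[ℝ] ℝ)).hasFDerivAt.comp y (hdiffH y)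
    have hcomp : HasFDerivAt (fun z => h z j)
        ((EuclideanSpace.proj j : EuclideanSpace ℝ (Fin p) →L[ℝ] ℝ).comp (fderiv ℝ h y)) y := hcomp0
    rw [hcomp.fderiv]
    rfl
  have hccont : ∀ j k : Fin p, Continuous fun y =>
      fderiv ℝ (fun z => μ z k) y (Gh j y) + (2/ε) * Hm y j k := by
    intro j k
    exact (((contDiff_one_iff_fderiv.1 (hμC k)).2.clm_apply (hGhC j).continuous)).add
      (continuous_const.mul (hHmC j k).continuous)
  have hvderiv : ∀ t, t0 ≤ t → HasDerivAt (fun s => h (x s))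
      ((WithLp.equiv 2 (Fin p → ℝ)).symm fun j =>
        -∑ k, (fderiv ℝ (fun z => μ z k) (x t) (Gh j (x t))
          + (2/ε) * Hm (x t) j k) * h (x t) k) t := by
    intro t ht
    have h1 : HasDerivAt (fun s => h (x s)) (fderiv ℝ h (x t) (-gradient feps (x t))) t :=
      (hdiffH (x t)).comp_hasDerivAt t (hx t ht)
    convert h1 using 1
    ext j
    rw [WithLp.equiv_symm_apply, PiLp.toLp_apply]
    rw [← hproj j, map_neg]
    congr 1
    rw [← inner_gradient_eq (fun z => h z j) (x t) (gradient feps (x t))]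
    rw [real_inner_comm, hgradfeps, hΦeval]
  -- Gronwall argument
  intro T hT
  set v : ℝ → EuclideanSpace ℝ (Fin p) := fun s => h (x s) with hvdef
  have hxc : ContinuousOn x (Set.Ici t0) :=
    fun t ht => ((hx t ht).continuousAt).continuousWithinAt
  have hvc : ContinuousOn v (Set.Icc t0 T) :=
    hh.continuous.comp_continuousOn (hxc.mono Set.Icc_subset_Ici_self)
  set Kf : ℝ → ℝ := fun t => ∑ j, ∑ k, |fderiv ℝ (fun z => μ z k) (x t) (Gh j (x t))
      + (2/ε) * Hm (x t) j k| with hKfdef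
  have hKfc : ContinuousOn Kf (Set.Icc t0 T) := by
    apply continuousOn_finset_sum; intro j _
    apply continuousOn_finset_sum; intro k _
    exact ((hccont j k).comp_continuousOn (hxc.mono Set.Icc_subset_Ici_self)).abs
  obtain ⟨tm, htm, hKm⟩ := isCompact_Icc.exists_isMaxOn (Set.nonempty_Icc.2 hT) hKfc
  have hbound : ∀ t ∈ Set.Ico t0 T,
      ‖(WithLp.equiv 2 (Fin p → ℝ)).symm fun j =>
        -∑ k, (fderiv ℝ (fun z => μ z k) (x t) (Gh j (x t))
          + (2/ε) * Hm (x t) j k) * h (x t) k‖ ≤ Kf tm * ‖v t‖ + 0 := by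
    intro t ht
    have htIcc : t ∈ Set.Icc t0 T := ⟨ht.1, le_of_lt ht.2⟩
    calc ‖(WithLp.equiv 2 (Fin p → ℝ)).symm fun j =>
        -∑ k, (fderiv ℝ (fun z => μ z k) (x t) (Gh j (x t))
          + (2/ε) * Hm (x t) j k) * h (x t) k‖
        ≤ ∑ j, |((WithLp.equiv 2 (Fin p → ℝ)).symm fun j =>
            -∑ k, (fderiv ℝ (fun z => μ z k) (x t) (Gh j (x t))
              + (2/ε) * Hm (x t) j k) * h (x t) k) j| := euclidean_norm_le_sum_abs _
      _ ≤ ∑ j, ∑ k, |fderiv ℝ (fun z => μ z k) (x t) (Gh j (x t))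
            + (2/ε) * Hm (x t) j k| * ‖v t‖ := by
          apply Finset.sum_le_sum
          intro j _
          rw [WithLp.equiv_symm_apply, PiLp.toLp_apply, abs_neg]
          calc |∑ k, (fderiv ℝ (fun z => μ z k) (x t) (Gh j (x t))
              + (2/ε) * Hm (x t) j k) * h (x t) k|
              ≤ ∑ k, |(fderiv ℝ (fun z => μ z k) (x t) (Gh j (x t))
                + (2/ε) * Hm (x t) j k) * h (x t) k| := Finset.abs_sum_le_sum_abs _ _
            _ ≤ ∑ k, |fderiv ℝ (fun z => μ z k) (x t) (Gh j (x t))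
                + (2/ε) * Hm (x t) j k| * ‖v t‖ := by
                apply Finset.sum_le_sum
                intro k _
                rw [abs_mul]
                exact mul_le_mul_of_nonneg_left
                  (euclidean_coord_le_norm (v t) k) (abs_nonneg _)
      _ = Kf t * ‖v t‖ := by
          rw [hKfdef, Finset.sum_mul]
          exact Finset.sum_congr rfl fun j _ => by rw [Finset.sum_mul]
      _ ≤ Kf tm * ‖v t‖ + 0 := by
          have := hKm htIcc
          have h0 : Kf t ≤ Kf tm := this
          nlinarith [norm_nonneg (v t)]
  have hgron := norm_le_gronwallBound_of_norm_deriv_right_le (δ := 0) hvc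
    (fun t ht => (hvderiv t ht.1).hasDerivWithinAt)
    (by simp only [hvdef]; rw [hx0]; simp) hbound
  have hT2 := hgron T (Set.right_mem_Icc.2 hT)
  rw [gronwallBound_ε0_δ0] at hT2
  exact norm_le_zero_iff.1 hT2
end

section
/- Let f, g : ℝⁿ → ℝ be twice continuously differentiable, let γ ≠ 0, let U ⊆ ℝⁿ be open with ∇g(x) ≠ 0 for all x ∈ U, and let D ⊂ U be compact. For x ∈ U define λ(x) = −⟨∇g(x), ∇f(x)⟩ / (‖∇g(x)‖² + γ² g(x)²), and for ε > 0 define p_ε(x) = max(g(x), −(ε/2)λ(x)) and the penalty function f^ε(x) = f(x) + λ(x) p_ε(x) + (1/ε) p_ε(x)². Then f^ε is continuously differentiable on U and there exists ε̄ > 0 such that for all ε ∈ (0, ε̄] and every x ∈ D with g(x) = 0, one has ⟨∇f^ε(x), ∇g(x)⟩ ≥ 0; that is, the gradient-descent direction −∇f^ε(x) does not point outside the feasible set {g ≤ 0} at its boundary, so the feasible set of the single-inequality-constrained problem is invariant under the gradient dynamics of f^ε for sufficiently small ε. -/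
open scoped RealInnerProductSpace

lemma relu_sq_hasDerivAt (t : ℝ) :
    HasDerivAt (fun t : ℝ => (max t 0)^2) (2 * max t 0) t := by
  rcases lt_trichotomy t 0 with h | h | h
  · have heq : (fun t : ℝ => (max t 0)^2) =ᶠ[nhds t] fun _ => (0:ℝ) := by
      filter_upwards [eventually_lt_nhds h] with s hs
      simp [max_eq_right hs.le]
    rw [max_eq_right h.le]
    simpa using (hasDerivAt_const t (0:ℝ)).congr_of_eventuallyEq heq
  · subst h
    rw [hasDerivAt_iff_isLittleO, Asymptotics.isLittleO_iff]
    intro c hc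
    filter_upwards [Metric.ball_mem_nhds (0:ℝ) hc] with s hs
    rw [Metric.mem_ball, Real.dist_eq, sub_zero] at hs
    have h1 : |max s 0| ≤ |s| := by
      rcases le_or_gt s 0 with h' | h'
      · simp [max_eq_right h']
      · simp [max_eq_left h'.le]
    have hb : ‖(max s 0)^2‖ ≤ c * ‖s - 0‖ := by
      simp only [sub_zero, Real.norm_eq_abs, abs_pow, sq, abs_mul]
      calc |max s 0| * |max s 0| ≤ |s| * |s| :=
            mul_le_mul h1 h1 (abs_nonneg _) (abs_nonneg _)
        _ ≤ c * |s| := mul_le_mul_of_nonneg_right hs.le (abs_nonneg _)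
    simpa using hb
  · have heq : (fun t : ℝ => (max t 0)^2) =ᶠ[nhds t] fun s => s^2 := by
      filter_upwards [eventually_gt_nhds h] with s hs
      simp [max_eq_left hs.le]
    rw [max_eq_left h.le]
    have h2 : HasDerivAt (fun s : ℝ => s^2) (2*t) t := by
      simpa using (hasDerivAt_pow 2 t)
    exact h2.congr_of_eventuallyEq heq

lemma relu_sq_contDiff : ContDiff ℝ 1 (fun t : ℝ => (max t 0)^2) := by
  rw [contDiff_one_iff_deriv]
  constructor
  · exact fun t => (relu_sq_hasDerivAt t).differentiableAt
  · have : deriv (fun t : ℝ => (max t 0)^2) = fun t => 2 * max t 0 := by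
      ext t; exact (relu_sq_hasDerivAt t).deriv
    rw [this]
    exact continuous_const.mul (continuous_id.max continuous_const)

lemma key_alg (ε a b : ℝ) (hε : ε ≠ 0) :
    b * max a (-(ε/2)*b) + (1/ε)*(max a (-(ε/2)*b))^2
      = -(ε/4)*b^2 + (1/ε)*(max (a + (ε/2)*b) 0)^2 := by
  have h : max a (-(ε/2)*b) + (ε/2)*b = max (a + (ε/2)*b) 0 := by
    rw [← max_add_add_right]; congr 1; ring
  rw [← h]; field_simp; ring

/-- For a single inequality constraint `g ≤ 0`, the continuously
differentiable exact penalty function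
`f^ε = f + λ·p_ε + (1/ε)p_ε²`, with multiplier function
`λ(x) = −⟨∇g(x), ∇f(x)⟩/(‖∇g(x)‖² + γ²g(x)²)` and
`p_ε(x) = max(g(x), −(ε/2)λ(x))`, is continuously differentiable on `U`, and
for sufficiently small `ε` the gradient-descent direction `−∇f^ε` does not
point outside the feasible set at boundary points of the compact set `D`. -/
theorem stmt15 (n : ℕ)
    (f g : EuclideanSpace ℝ (Fin n) → ℝ) (hf : ContDiff ℝ 2 f) (hg : ContDiff ℝ 2 g)
    (γ : ℝ) (hγ : γ ≠ 0)
    (U : Set (EuclideanSpace ℝ (Fin n))) (hU : IsOpen U)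
    (hgradg : ∀ x ∈ U, gradient g x ≠ 0)
    (D : Set (EuclideanSpace ℝ (Fin n))) (hD : IsCompact D) (hDU : D ⊆ U)
    (lam : EuclideanSpace ℝ (Fin n) → ℝ)
    (hlam : ∀ x ∈ U, lam x =
      -⟪gradient g x, gradient f x⟫ / (‖gradient g x‖ ^ 2 + γ ^ 2 * (g x) ^ 2))
    (pe : ℝ → EuclideanSpace ℝ (Fin n) → ℝ)
    (hpe : ∀ ε : ℝ, ∀ x ∈ U, pe ε x = max (g x) (-(ε / 2) * lam x))
    (feps : ℝ → EuclideanSpace ℝ (Fin n) → ℝ)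
    (hfeps : ∀ ε : ℝ, ∀ x ∈ U,
      feps ε x = f x + lam x * pe ε x + (1 / ε) * (pe ε x) ^ 2) :
    (∀ ε : ℝ, 0 < ε → ContDiffOn ℝ 1 (feps ε) U) ∧
    ∃ εbar > (0 : ℝ), ∀ ε ∈ Set.Ioc (0 : ℝ) εbar, ∀ x ∈ D, g x = 0 →
      0 ≤ ⟪gradient (feps ε) x, gradient g x⟫ := by
  have hinner : ∀ (F : EuclideanSpace ℝ (Fin n) → ℝ) (x v : EuclideanSpace ℝ (Fin n)),
      ⟪gradient F x, v⟫ = fderiv ℝ F x v := by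
    intro F x v
    rw [gradient, ← InnerProductSpace.toDual_apply_apply, LinearIsometryEquiv.apply_symm_apply]
  have hGg : ContDiff ℝ 1 (fun x => gradient g x) :=
    ((InnerProductSpace.toDual ℝ (EuclideanSpace ℝ (Fin n))).symm.contDiff).comp
      (hg.fderiv_right (by norm_num))
  have hGf : ContDiff ℝ 1 (fun x => gradient f x) :=
    ((InnerProductSpace.toDual ℝ (EuclideanSpace ℝ (Fin n))).symm.contDiff).comp
      (hf.fderiv_right (by norm_num))
  set den : EuclideanSpace ℝ (Fin n) → ℝ :=
    fun x => ‖gradient g x‖ ^ 2 + γ ^ 2 * (g x) ^ 2 with hden_def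
  have hdenC : ContDiff ℝ 1 den :=
    (hGg.norm_sq (𝕜 := ℝ)).add (contDiff_const.mul ((hg.of_le (by norm_num)).pow 2))
  have hdenpos : ∀ x ∈ U, 0 < den x := by
    intro x hx
    have h1 : 0 < ‖gradient g x‖ ^ 2 := pow_pos (norm_pos_iff.mpr (hgradg x hx)) 2
    have h2 : 0 ≤ γ ^ 2 * (g x) ^ 2 := by positivity
    simp only [hden_def]
    linarith
  set l : EuclideanSpace ℝ (Fin n) → ℝ :=
    fun x => -⟪gradient g x, gradient f x⟫ / den x with hl_def
  have hlC : ContDiffOn ℝ 1 l U :=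
    ((hGg.inner ℝ hGf).neg.contDiffOn).div hdenC.contDiffOn
      (fun x hx => (hdenpos x hx).ne')
  have hlamU : ∀ x ∈ U, lam x = l x := fun x hx => hlam x hx
  have hFe : ∀ ε : ℝ, 0 < ε →
      (∀ x ∈ U, feps ε x
        = f x - (ε/4) * (l x)^2 + (1/ε) * (max (g x + (ε/2) * l x) 0)^2) := by
    intro ε hε x hx
    rw [hfeps ε x hx, hpe ε x hx, hlamU x hx]
    have hk := key_alg ε (g x) (l x) hε.ne'
    linarith
  have hFeC : ∀ ε : ℝ, 0 < ε → ContDiffOn ℝ 1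
      (fun x => f x - (ε/4) * (l x)^2 + (1/ε) * (max (g x + (ε/2) * l x) 0)^2) U := by
    intro ε hε
    have hwC : ContDiffOn ℝ 1 (fun x => g x + (ε/2) * l x) U :=
      ((hg.of_le (by norm_num)).contDiffOn).add (contDiffOn_const.mul hlC)
    have hcomp : ContDiffOn ℝ 1 (fun x => (max (g x + (ε/2) * l x) 0)^2) U :=
      relu_sq_contDiff.comp_contDiffOn hwC
    exact (((hf.of_le (by norm_num)).contDiffOn).sub
      (contDiffOn_const.mul (hlC.pow 2))).add (contDiffOn_const.mul hcomp)
  have hmain : ∀ ε : ℝ, 0 < ε → ContDiffOn ℝ 1 (feps ε) U := by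
    intro ε hε
    exact (hFeC ε hε).congr (fun x hx => hFe ε hε x hx)
  refine ⟨hmain, ?_⟩
  -- compactness setup
  have hGgc : Continuous (fun x => gradient g x) := hGg.continuous
  have hflc : ContinuousOn (fun x => fderiv ℝ l x) U :=
    hlC.continuousOn_fderiv_of_isOpen hU le_rfl
  set φ : EuclideanSpace ℝ (Fin n) → ℝ :=
    fun x => ‖fderiv ℝ l x‖ * ‖gradient g x‖ with hφ_def
  have hφ0 : ∀ x, 0 ≤ φ x := fun x => mul_nonneg (norm_nonneg _) (norm_nonneg _)
  set ρ : EuclideanSpace ℝ (Fin n) → ℝ :=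
    fun x => ‖gradient g x‖^2 / (φ x + 1) with hρ_def
  have hρcont : ContinuousOn ρ D := by
    apply ContinuousOn.div
    · exact ((hGgc.norm.pow 2).continuousOn)
    · exact ((hflc.mono hDU).norm.mul hGgc.continuousOn.norm).add continuousOn_const
    · intro x _
      have := hφ0 x
      positivity
  have hρpos : ∀ x ∈ D, 0 < ρ x := by
    intro x hx
    have h1 : 0 < ‖gradient g x‖^2 := pow_pos (norm_pos_iff.mpr (hgradg x (hDU hx))) 2
    have h2 : 0 < φ x + 1 := by have := hφ0 x; linarith
    exact div_pos h1 h2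
  by_cases hne : D.Nonempty
  swap
  · exact ⟨1, one_pos, fun ε _ x hxD _ => absurd ⟨x, hxD⟩ hne⟩
  obtain ⟨x₀, hx₀D, hmin⟩ := hD.exists_isMinOn hne hρcont
  refine ⟨ρ x₀, hρpos x₀ hx₀D, ?_⟩
  rintro ε ⟨hε0, hεle⟩ x hxD hgx0
  have hxU : x ∈ U := hDU hxD
  -- differentiability data at x
  have hdl : DifferentiableAt ℝ l x :=
    ((hlC.differentiableOn one_ne_zero).differentiableAt (hU.mem_nhds hxU))
  have hLl : HasFDerivAt l (fderiv ℝ l x) x := hdl.hasFDerivAt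
  have hDf : HasFDerivAt f (fderiv ℝ f x) x :=
    ((hf.differentiable (by norm_num)) x).hasFDerivAt
  have hDg : HasFDerivAt g (fderiv ℝ g x) x :=
    ((hg.differentiable (by norm_num)) x).hasFDerivAt
  have hA : HasFDerivAt (fun y => (l y)^2) ((2 * l x) • fderiv ℝ l x) x := by
    have h := hLl.mul hLl
    have h2 : (2 * l x) • fderiv ℝ l x = l x • fderiv ℝ l x + l x • fderiv ℝ l x := by
      rw [two_mul, add_smul]
    rw [h2]
    simpa [pow_two, Pi.mul_def] using h
  have hw : HasFDerivAt (fun y => g y + (ε/2) * l y)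
      (fderiv ℝ g x + (ε/2) • fderiv ℝ l x) x := hDg.add (hLl.const_mul (ε/2))
  have hcomp : HasFDerivAt (fun y => (max (g y + (ε/2) * l y) 0)^2)
      ((2 * max (g x + (ε/2) * l x) 0) • (fderiv ℝ g x + (ε/2) • fderiv ℝ l x)) x :=
    by have := (relu_sq_hasDerivAt (g x + (ε/2) * l x)).comp_hasFDerivAt x hw; exact this
  have hFeAt : HasFDerivAt
      (fun y => f y - (ε/4) * (l y)^2 + (1/ε) * (max (g y + (ε/2) * l y) 0)^2)
      ((fderiv ℝ f x - (ε/4) • ((2 * l x) • fderiv ℝ l x))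
        + (1/ε) • ((2 * max (g x + (ε/2) * l x) 0)
          • (fderiv ℝ g x + (ε/2) • fderiv ℝ l x))) x :=
    (hDf.sub (hA.const_mul (ε/4))).add (hcomp.const_mul (1/ε))
  have hev : feps ε =ᶠ[nhds x]
      (fun y => f y - (ε/4) * (l y)^2 + (1/ε) * (max (g y + (ε/2) * l y) 0)^2) := by
    filter_upwards [hU.mem_nhds hxU] with y hy
    exact hFe ε hε0 y hy
  have hfepsAt : HasFDerivAt (feps ε)
      ((fderiv ℝ f x - (ε/4) • ((2 * l x) • fderiv ℝ l x))
        + (1/ε) • ((2 * max (g x + (ε/2) * l x) 0)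
          • (fderiv ℝ g x + (ε/2) • fderiv ℝ l x))) x :=
    hFeAt.congr_of_eventuallyEq hev
  -- abbreviations
  set v : EuclideanSpace ℝ (Fin n) := gradient g x with hv_def
  set I : ℝ := ⟪v, gradient f x⟫ with hI_def
  set s : ℝ := ‖v‖^2 with hs_def
  set L : ℝ := fderiv ℝ l x v with hL_def
  have hspos : 0 < s := by
    rw [hs_def, hv_def]
    exact pow_pos (norm_pos_iff.mpr (hgradg x hxU)) 2
  have hfv : fderiv ℝ f x v = I := by
    rw [hI_def, real_inner_comm, ← hinner f x v]
  have hgv : fderiv ℝ g x v = s := by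
    rw [hs_def, ← real_inner_self_eq_norm_sq, hv_def]
    exact (hinner g x _).symm
  have hlx : l x = -I / s := by
    rw [hI_def, hs_def, hv_def]
    simp only [hl_def, hden_def, hgx0]
    norm_num
  have hval : ⟪gradient (feps ε) x, v⟫
      = I - (ε/4) * ((2 * l x) * L) + (1/ε) * ((2 * max (g x + (ε/2) * l x) 0)
        * (s + (ε/2) * L)) := by
    rw [hinner (feps ε) x v, hfepsAt.fderiv]
    simp only [ContinuousLinearMap.add_apply, ContinuousLinearMap.sub_apply,
      ContinuousLinearMap.coe_smul', Pi.smul_apply, smul_eq_mul, hfv, hgv, ← hL_def]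
    try ring
  rw [hval, hgx0]
  have hs0 : s ≠ 0 := hspos.ne'
  rcases le_or_gt 0 (l x) with hsgn | hsgn
  · have hmax : max ((0:ℝ) + (ε/2) * l x) 0 = (ε/2) * l x := by
      rw [zero_add]
      exact max_eq_left (by positivity)
    rw [hmax]
    have hIl : l x * s = -I := by rw [hlx]; field_simp
    have hexp : I - (ε/4) * ((2 * l x) * L)
        + (1/ε) * ((2 * ((ε/2) * l x)) * (s + (ε/2) * L)) = I + l x * s := by
      field_simp
      ring
    rw [hexp, hIl]
    linarith
  · have hmax : max ((0:ℝ) + (ε/2) * l x) 0 = 0 := by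
      rw [zero_add]
      exact max_eq_right (by nlinarith)
    rw [hmax]
    have hIl : I = -(l x) * s := by
      rw [hlx]; field_simp
    have hLb : |L| ≤ φ x := by
      rw [hL_def, hφ_def]
      exact (fderiv ℝ l x).le_opNorm v
    have hLlow : -(φ x) ≤ L := (abs_le.mp hLb).1
    have hφx1 : 0 < φ x + 1 := by have := hφ0 x; linarith
    have hρx : ρ x₀ ≤ s / (φ x + 1) := by
      have h := hmin hxD
      simpa [hρ_def, hs_def, hv_def] using h
    have hcb : ρ x₀ * (φ x + 1) ≤ s := (le_div_iff₀ hφx1).mp hρx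
    have hcb' : ρ x₀ * φ x + ρ x₀ ≤ s := by
      rw [mul_add, mul_one] at hcb; exact hcb
    have h1 : (ε/2) * (-(φ x)) ≤ (ε/2) * L :=
      mul_le_mul_of_nonneg_left hLlow (by linarith)
    have h2 : ε * φ x ≤ ρ x₀ * φ x :=
      mul_le_mul_of_nonneg_right hεle (hφ0 x)
    have hρφ : 0 ≤ ρ x₀ * φ x := mul_nonneg (hρpos x₀ hx₀D).le (hφ0 x)
    have hkey : 0 ≤ s + (ε/2) * L := by linarith
    have hfinal : I - (ε/4) * ((2 * l x) * L) + (1/ε) * ((2 * 0) * (s + (ε/2) * L))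
        = (-(l x)) * (s + (ε/2) * L) := by
      rw [hIl]; ring
    rw [hfinal]
    exact mul_nonneg (by linarith) hkey
end
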